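/- arXiv:2205.07182 — 4 statements merged into one kernel-verified Lean document; each statement's English description precedes it below -/
import Mathlib

section
/- Let (X, A, Y) be random with A ∈ 𝒜 finite, Y ∈ {0,1}, and for a classifier f : 𝒳 × 𝒜 → [0,1] define the randomized prediction Ŷ_f (equal to 1 with probability f(x,a) given X=x, A=a, independently of Y given (X,A)). Suppose f satisfies predictive parity with common positive predictive value s, i.e., P(Y=1 | Ŷ_f=1, A=a) = s for all a. Then the cost-sensitive risk R_c(f) = c·P(Ŷ_f=1, Y=0) + (1−c)·P(Ŷ_f=0, Y=1) satisfies R_c(f) = Σ_a p_a (c − s) ∫ f(x,a) dP_{X|a}(x) + (1−c)·P(Y=1), where p_a = P(A=a) and P_{X|a} is the conditional distribution of X given A=a. -/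
open MeasureTheory

/-- Cost-sensitive risk identity under predictive parity (Statement 7). -/
theorem stmt_7 {X A : Type*} [MeasurableSpace X] [Fintype A]
    (p : A → ℝ) (hp : ∀ a, 0 ≤ p a) (hpsum : ∑ a, p a = 1)
    (μ : A → Measure X) (hμ : ∀ a, IsProbabilityMeasure (μ a))
    (η : A → X → ℝ) (hηm : ∀ a, Measurable (η a)) (hη01 : ∀ a x, η a x ∈ Set.Icc (0:ℝ) 1)
    (f : A → X → ℝ) (hfm : ∀ a, Measurable (f a)) (hf01 : ∀ a x, f a x ∈ Set.Icc (0:ℝ) 1)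
    (c : ℝ) (hc : c ∈ Set.Icc (0:ℝ) 1)
    (s : ℝ)
    -- predictive parity: each group has positive acceptance rate and common PPV `s`
    (haccept : ∀ a, 0 < ∫ x, f a x ∂μ a)
    (hppv : ∀ a, (∫ x, f a x * η a x ∂μ a) / (∫ x, f a x ∂μ a) = s) :
    -- R_c(f) = Σ_a p_a (c − s) ∫ f(·,a) dP_{X|a} + (1−c)·P(Y=1)
    ∑ a, p a * ∫ x, (c * f a x * (1 - η a x) + (1 - c) * (1 - f a x) * η a x) ∂μ a
      = ∑ a, p a * (c - s) * ∫ x, f a x ∂μ a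
        + (1 - c) * ∑ a, p a * ∫ x, η a x ∂μ a := by
  have hint : ∀ (a : A) (g : X → ℝ), Measurable g → (∀ x, |g x| ≤ 1) →
      Integrable g (μ a) := by
    intro a g hm hb
    haveI := hμ a
    exact (integrable_const (1:ℝ)).mono' hm.aestronglyMeasurable
      (Filter.Eventually.of_forall hb)
  have habs : ∀ (t : ℝ), t ∈ Set.Icc (0:ℝ) 1 → |t| ≤ 1 := by
    intro t ht; rw [abs_le]; exact ⟨by linarith [ht.1], ht.2⟩
  have hf_int : ∀ a, Integrable (f a) (μ a) := fun a =>
    hint a (f a) (hfm a) (fun x => habs _ (hf01 a x))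
  have hη_int : ∀ a, Integrable (η a) (μ a) := fun a =>
    hint a (η a) (hηm a) (fun x => habs _ (hη01 a x))
  have hfη_int : ∀ a, Integrable (fun x => f a x * η a x) (μ a) := by
    intro a
    refine hint a _ ((hfm a).mul (hηm a)) (fun x => ?_)
    rw [abs_mul]
    exact mul_le_one₀ (habs _ (hf01 a x)) (abs_nonneg _) (habs _ (hη01 a x))
  have key : ∀ a, ∫ x, f a x * η a x ∂μ a = s * ∫ x, f a x ∂μ a := by
    intro a
    have := hppv a
    rw [div_eq_iff (ne_of_gt (haccept a))] at this
    linarith [this]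
  have hpoint : ∀ a, ∫ x, (c * f a x * (1 - η a x) + (1 - c) * (1 - f a x) * η a x) ∂μ a
      = (c - s) * ∫ x, f a x ∂μ a + (1 - c) * ∫ x, η a x ∂μ a := by
    intro a
    have heq : (fun x => c * f a x * (1 - η a x) + (1 - c) * (1 - f a x) * η a x)
        = fun x => c * f a x + (1 - c) * η a x - f a x * η a x := by
      funext x; ring
    rw [heq]
    have h1 : Integrable (fun x => c * f a x + (1 - c) * η a x) (μ a) :=
      ((hf_int a).const_mul c).add ((hη_int a).const_mul (1 - c))
    have h2 : Integrable (fun x => c * f a x) (μ a) := (hf_int a).const_mul c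
    have h3 : Integrable (fun x => (1 - c) * η a x) (μ a) := (hη_int a).const_mul (1 - c)
    rw [integral_sub h1 (hfη_int a), integral_add h2 h3,
      MeasureTheory.integral_const_mul, MeasureTheory.integral_const_mul, key a]
    ring
  calc ∑ a, p a * ∫ x, (c * f a x * (1 - η a x) + (1 - c) * (1 - f a x) * η a x) ∂μ a
      = ∑ a, (p a * (c - s) * ∫ x, f a x ∂μ a + (1 - c) * (p a * ∫ x, η a x ∂μ a)) := by
        refine Finset.sum_congr rfl (fun a _ => ?_)
        rw [hpoint a]; ring
    _ = _ := by rw [Finset.sum_add_distrib, ← Finset.mul_sum]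
end

section
/- Let μ be a probability measure on X and η : X → [0,1] measurable. Suppose f : X → [0,1] is measurable and f_G(x) = I(η(x) > t) + τ(x)·I(η(x) = t) is a thresholding rule with t ∈ [0,1] and τ : X → [0,1]. If ∫ f dμ = ∫ f_G dμ and ∫ f·η dμ = ∫ f_G·η dμ, then ∫_{η > t} (f − 1)(η − t) dμ + ∫_{η < t} f·(η − t) dμ = 0, and consequently f = 1 μ-a.e. on {η > t} and f = 0 μ-a.e. on {η < t}; i.e., f is itself a thresholding rule with threshold t. -/
open MeasureTheory

theorem stmt_8 {X : Type*} [MeasurableSpace X] (μ : Measure X) [IsProbabilityMeasure μ]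
    (η : X → ℝ) (hη : Measurable η) (hη01 : ∀ x, η x ∈ Set.Icc (0:ℝ) 1)
    (f : X → ℝ) (hfm : Measurable f) (hf01 : ∀ x, f x ∈ Set.Icc (0:ℝ) 1)
    (t : ℝ) (ht : t ∈ Set.Icc (0:ℝ) 1)
    (τ : X → ℝ) (hτm : Measurable τ) (hτ01 : ∀ x, τ x ∈ Set.Icc (0:ℝ) 1)
    (fG : X → ℝ)
    (hfG : ∀ x, fG x = Set.indicator {x | η x > t} 1 x + τ x * Set.indicator {x | η x = t} 1 x)
    (hrate : ∫ x, f x ∂μ = ∫ x, fG x ∂μ)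
    (hppv : ∫ x, f x * η x ∂μ = ∫ x, fG x * η x ∂μ) :
    ((∫ x in {x | η x > t}, (f x - 1) * (η x - t) ∂μ)
        + ∫ x in {x | η x < t}, f x * (η x - t) ∂μ = 0) ∧
    (∀ᵐ x ∂μ.restrict {x | η x > t}, f x = 1) ∧
    (∀ᵐ x ∂μ.restrict {x | η x < t}, f x = 0) := by
  have hA : MeasurableSet {x | η x > t} := measurableSet_lt measurable_const hη
  have hB : MeasurableSet {x | η x = t} := hη (measurableSet_singleton t)
  have hC : MeasurableSet {x | η x < t} := measurableSet_lt hη measurable_const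
  have hfGeq : fG = fun x => Set.indicator {x | η x > t} 1 x + τ x * Set.indicator {x | η x = t} 1 x :=
    funext hfG
  have hfGm : Measurable fG := by
    rw [hfGeq]
    exact (measurable_const.indicator hA).add (hτm.mul (measurable_const.indicator hB))
  -- values of fG
  have hfGgt : ∀ x, t < η x → fG x = 1 := by
    intro x hx
    simp [hfG x, Set.indicator_apply, Set.mem_setOf_eq, hx, ne_of_gt hx]
  have hfGlt : ∀ x, η x < t → fG x = 0 := by
    intro x hx
    simp [hfG x, Set.indicator_apply, Set.mem_setOf_eq, not_lt.2 hx.le, ne_of_lt hx]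
  have hfGeqt : ∀ x, η x = t → fG x = τ x := by
    intro x hx
    simp [hfG x, Set.indicator_apply, Set.mem_setOf_eq, hx, lt_irrefl]
  have hfG01 : ∀ x, fG x ∈ Set.Icc (0:ℝ) 1 := by
    intro x
    rcases lt_trichotomy (η x) t with h | h | h
    · rw [hfGlt x h]; constructor <;> norm_num
    · rw [hfGeqt x h]; exact hτ01 x
    · rw [hfGgt x h]; constructor <;> norm_num
  -- integrability helper
  have hint : ∀ (g : X → ℝ), Measurable g → (∀ x, |g x| ≤ 2) → Integrable g μ := by
    intro g hg hb
    exact ⟨hg.aestronglyMeasurable,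
      HasFiniteIntegral.of_bounded (C := 2) (Filter.Eventually.of_forall hb)⟩
  have hbη := hη01
  have h1 : Integrable (fun x => f x * η x) μ := by
    refine hint _ (hfm.mul hη) fun x => ?_
    have h := hf01 x; have h' := hη01 x
    rw [abs_mul]
    have e1 : |f x| ≤ 1 := abs_le.2 ⟨by linarith [h.1], h.2⟩
    have e2 : |η x| ≤ 1 := abs_le.2 ⟨by linarith [h'.1], h'.2⟩
    nlinarith [abs_nonneg (f x), abs_nonneg (η x)]
  have h2 : Integrable (fun x => fG x * η x) μ := by
    refine hint _ (hfGm.mul hη) fun x => ?_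
    have h := hfG01 x; have h' := hη01 x
    rw [abs_mul]
    have e1 : |fG x| ≤ 1 := abs_le.2 ⟨by linarith [h.1], h.2⟩
    have e2 : |η x| ≤ 1 := abs_le.2 ⟨by linarith [h'.1], h'.2⟩
    nlinarith [abs_nonneg (fG x), abs_nonneg (η x)]
  have h3 : Integrable f μ := by
    refine hint _ hfm fun x => ?_
    have h := hf01 x
    rw [abs_le]; constructor <;> linarith [h.1, h.2]
  have h4 : Integrable fG μ := by
    refine hint _ hfGm fun x => ?_
    have h := hfG01 x
    rw [abs_le]; constructor <;> linarith [h.1, h.2]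
  -- key: total integral of (f - fG)(η - t) is 0
  have hall : ∫ x, (f x - fG x) * (η x - t) ∂μ = 0 := by
    have heq : (fun x => (f x - fG x) * (η x - t))
        = fun x => (f x * η x - fG x * η x) - (t * f x - t * fG x) := by
      funext x; ring
    have i1 : Integrable (fun x => f x * η x - fG x * η x) μ := h1.sub h2
    have i2 : Integrable (fun x => t * f x - t * fG x) μ := (h3.const_mul t).sub (h4.const_mul t)
    rw [heq, integral_sub i1 i2, integral_sub h1 h2, integral_sub (h3.const_mul t) (h4.const_mul t),
      integral_const_mul, integral_const_mul, hrate, hppv]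
    ring
  -- pointwise decomposition
  have hdec : (fun x => (f x - fG x) * (η x - t))
      = fun x => Set.indicator {x | η x > t} (fun x => (f x - 1) * (η x - t)) x
        + Set.indicator {x | η x < t} (fun x => f x * (η x - t)) x := by
    funext x
    rcases lt_trichotomy (η x) t with h | h | h
    · rw [Set.indicator_apply, Set.indicator_apply, if_neg (by simp [Set.mem_setOf_eq, not_lt.2 h.le]),
        if_pos (by exact h), hfGlt x h]
      ring
    · rw [Set.indicator_apply, Set.indicator_apply, if_neg (by simp [Set.mem_setOf_eq, h]),
        if_neg (by simp [Set.mem_setOf_eq, h]), hfGeqt x h, h]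
      ring
    · rw [Set.indicator_apply, Set.indicator_apply, if_pos (by exact h),
        if_neg (by simp [Set.mem_setOf_eq, not_lt.2 h.le]), hfGgt x h]
      ring
  have hiA : Integrable (fun x => (f x - 1) * (η x - t)) μ := by
    refine hint _ ((hfm.sub measurable_const).mul (hη.sub measurable_const)) fun x => ?_
    have h := hf01 x; have h' := hη01 x; have h'' := ht
    rw [abs_mul]
    have e1 : |f x - 1| ≤ 1 := abs_le.2 ⟨by linarith [h.1, h.2], by linarith [h.1, h.2]⟩
    have e2 : |η x - t| ≤ 1 := abs_le.2 ⟨by linarith [h'.1, h''.2], by linarith [h'.2, h''.1]⟩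
    nlinarith [abs_nonneg (f x - 1), abs_nonneg (η x - t)]
  have hiC : Integrable (fun x => f x * (η x - t)) μ := by
    refine hint _ (hfm.mul (hη.sub measurable_const)) fun x => ?_
    have h := hf01 x; have h' := hη01 x; have h'' := ht
    rw [abs_mul]
    have e1 : |f x| ≤ 1 := abs_le.2 ⟨by linarith [h.1], h.2⟩
    have e2 : |η x - t| ≤ 1 := abs_le.2 ⟨by linarith [h'.1, h''.2], by linarith [h'.2, h''.1]⟩
    nlinarith [abs_nonneg (f x), abs_nonneg (η x - t)]
  have hsum : (∫ x in {x | η x > t}, (f x - 1) * (η x - t) ∂μ)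
      + ∫ x in {x | η x < t}, f x * (η x - t) ∂μ = 0 := by
    rw [← integral_indicator hA, ← integral_indicator hC,
      ← integral_add (hiA.indicator hA) (hiC.indicator hC), ← hdec, hall]
  refine ⟨hsum, ?_, ?_⟩
  · -- f = 1 a.e. on {η > t}
    have hleA : ∫ x in {x | η x > t}, (f x - 1) * (η x - t) ∂μ ≤ 0 := by
      refine setIntegral_nonpos hA fun x hx => ?_
      have h := hf01 x
      have : t < η x := hx
      nlinarith [h.2]
    have hleC : ∫ x in {x | η x < t}, f x * (η x - t) ∂μ ≤ 0 := by
      refine setIntegral_nonpos hC fun x hx => ?_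
      have h := hf01 x
      have : η x < t := hx
      nlinarith [h.1]
    have hAz : ∫ x in {x | η x > t}, (f x - 1) * (η x - t) ∂μ = 0 :=
      le_antisymm hleA (by linarith)
    have hz : ∫ x in {x | η x > t}, (1 - f x) * (η x - t) ∂μ = 0 := by
      have : (fun x => (1 - f x) * (η x - t)) = fun x => -((f x - 1) * (η x - t)) := by
        funext x; ring
      rw [this, integral_neg, hAz, neg_zero]
    have hnn : 0 ≤ᵐ[μ.restrict {x | η x > t}] fun x => (1 - f x) * (η x - t) := by
      refine (ae_restrict_iff' hA).2 (Filter.Eventually.of_forall fun x hx => ?_)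
      have h := hf01 x
      have : t < η x := hx
      simp only [Pi.zero_apply]
      nlinarith [h.2]
    have hiA' : Integrable (fun x => (1 - f x) * (η x - t)) (μ.restrict {x | η x > t}) := by
      have : (fun x => (1 - f x) * (η x - t)) = fun x => -((f x - 1) * (η x - t)) := by
        funext x; ring
      rw [this]
      exact (hiA.restrict).neg
    have hz' := (integral_eq_zero_iff_of_nonneg_ae hnn hiA').1 hz
    have hmem := ae_restrict_mem (μ := μ) hA
    filter_upwards [hz', hmem] with x h1 h2
    have hlt : t < η x := h2
    have : (1 - f x) * (η x - t) = 0 := h1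
    rcases mul_eq_zero.1 this with h | h
    · linarith
    · linarith
  · -- f = 0 a.e. on {η < t}
    have hleA : ∫ x in {x | η x > t}, (f x - 1) * (η x - t) ∂μ ≤ 0 := by
      refine setIntegral_nonpos hA fun x hx => ?_
      have h := hf01 x
      have : t < η x := hx
      nlinarith [h.2]
    have hleC : ∫ x in {x | η x < t}, f x * (η x - t) ∂μ ≤ 0 := by
      refine setIntegral_nonpos hC fun x hx => ?_
      have h := hf01 x
      have : η x < t := hx
      nlinarith [h.1]
    have hCz : ∫ x in {x | η x < t}, f x * (η x - t) ∂μ = 0 :=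
      le_antisymm hleC (by linarith)
    have hz : ∫ x in {x | η x < t}, f x * (t - η x) ∂μ = 0 := by
      have : (fun x => f x * (t - η x)) = fun x => -(f x * (η x - t)) := by
        funext x; ring
      rw [this, integral_neg, hCz, neg_zero]
    have hnn : 0 ≤ᵐ[μ.restrict {x | η x < t}] fun x => f x * (t - η x) := by
      refine (ae_restrict_iff' hC).2 (Filter.Eventually.of_forall fun x hx => ?_)
      have h := hf01 x
      have : η x < t := hx
      simp only [Pi.zero_apply]
      nlinarith [h.1]
    have hiC' : Integrable (fun x => f x * (t - η x)) (μ.restrict {x | η x < t}) := by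
      have : (fun x => f x * (t - η x)) = fun x => -(f x * (η x - t)) := by
        funext x; ring
      rw [this]
      exact (hiC.restrict).neg
    have hz' := (integral_eq_zero_iff_of_nonneg_ae hnn hiC').1 hz
    have hmem := ae_restrict_mem (μ := μ) hC
    filter_upwards [hz', hmem] with x h1 h2
    have hlt : η x < t := h2
    have : f x * (t - η x) = 0 := h1
    rcases mul_eq_zero.1 this with h | h
    · exact h
    · linarith
end

section
/- Let 𝒜 be finite with group weights p_a > 0, Σ_a p_a = 1, feature distributions P_{X|a} on X, and conditional probabilities η_a : X → [0,1]. Let f_G(x, a) = I(η_a(x) > t_a) + τ_a(x)·I(η_a(x) = t_a) be a group-wise thresholding rule, and let f be any classifier with the same group-wise positive predictive values: for all a, ∫ f(x,a) η_a(x) dP_{X|a}/∫ f(x,a) dP_{X|a} = ∫ f_G(x,a) η_a(x) dP_{X|a}/∫ f_G(x,a) dP_{X|a} =: s_G (all denominators positive). Suppose additionally that for each a, either τ_a ≡ 1 or ∫ f_G(x,a) η_a dP_{X|a} > t_a ∫ f_G(x,a) dP_{X|a}. If f is not (a.e. equal to) a group-wise thresholding rule, then Σ_a p_a ∫ [f_G(x,a)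 − f(x,a)] dP_{X|a}(x) > 0, i.e., f_G accepts strictly more mass overall. -/
open MeasureTheory

lemma integ_of_bound {X : Type*} [MeasurableSpace X] (μ : Measure X) [IsFiniteMeasure μ]
    (g : X → ℝ) (hg : Measurable g) (C : ℝ) (hb : ∀ x, |g x| ≤ C) : Integrable g μ :=
  (integrable_const C).mono' hg.aestronglyMeasurable
    (Filter.Eventually.of_forall fun x => by simpa [Real.norm_eq_abs] using hb x)

/-- Lemma 3 of the paper: among classifiers with the same group-wise PPV as a suitable
group-wise thresholding rule, any non-GWTR accepts strictly less mass overall. -/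
theorem stmt_11 {X A : Type*} [MeasurableSpace X] [Fintype A]
    (p : A → ℝ) (hp : ∀ a, 0 < p a) (hpsum : ∑ a, p a = 1)
    (μ : A → Measure X) (hμ : ∀ a, IsProbabilityMeasure (μ a))
    (η : A → X → ℝ) (hηm : ∀ a, Measurable (η a)) (hη01 : ∀ a x, η a x ∈ Set.Icc (0:ℝ) 1)
    (t : A → ℝ) (ht : ∀ a, t a ∈ Set.Icc (0:ℝ) 1)
    (τ : A → X → ℝ) (hτm : ∀ a, Measurable (τ a)) (hτ01 : ∀ a x, τ a x ∈ Set.Icc (0:ℝ) 1)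
    (fG : A → X → ℝ)
    (hfG : ∀ a x, fG a x = Set.indicator {x | η a x > t a} 1 x
        + τ a x * Set.indicator {x | η a x = t a} 1 x)
    (f : A → X → ℝ) (hfm : ∀ a, Measurable (f a)) (hf01 : ∀ a x, f a x ∈ Set.Icc (0:ℝ) 1)
    (hden : ∀ a, 0 < ∫ x, f a x ∂μ a) (hdenG : ∀ a, 0 < ∫ x, fG a x ∂μ a)
    (sG : ℝ)
    (hppvG : ∀ a, (∫ x, fG a x * η a x ∂μ a) / (∫ x, fG a x ∂μ a) = sG)
    (hppvf : ∀ a, (∫ x, f a x * η a x ∂μ a) / (∫ x, f a x ∂μ a) = sG)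
    (hcond : ∀ a, (∀ x, τ a x = 1) ∨
      (t a * ∫ x, fG a x ∂μ a < ∫ x, fG a x * η a x ∂μ a))
    (hnotGWTR : ¬ ∃ (t' : A → ℝ) (τ' : A → X → ℝ),
      (∀ a, t' a ∈ Set.Icc (0:ℝ) 1) ∧ (∀ a x, τ' a x ∈ Set.Icc (0:ℝ) 1) ∧
      ∀ a, f a =ᵐ[μ a] fun x => Set.indicator {x | η a x > t' a} 1 x
          + τ' a x * Set.indicator {x | η a x = t' a} 1 x) :
    0 < ∑ a, p a * ((∫ x, fG a x ∂μ a) - ∫ x, f a x ∂μ a) := by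
  classical
  have key : ∀ a, (∫ x, f a x ∂μ a ≤ ∫ x, fG a x ∂μ a) ∧
      ((∫ x, fG a x ∂μ a) = (∫ x, f a x ∂μ a) →
        f a =ᵐ[μ a] fun x => Set.indicator {x | η a x > t a} 1 x
          + f a x * Set.indicator {x | η a x = t a} 1 x) := by
    intro a
    haveI := hμ a
    have hSgt : MeasurableSet {x | η a x > t a} := measurableSet_lt measurable_const (hηm a)
    have hSeq : MeasurableSet {x | η a x = t a} :=
      (hηm a) (measurableSet_singleton (t a))
    -- pointwise values of fG
    have hgt : ∀ x, t a < η a x → fG a x = 1 := by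
      intro x hx
      rw [hfG, Set.indicator_of_mem (by exact hx),
        Set.indicator_of_notMem (by exact ne_of_gt hx)]
      simp
    have heqv : ∀ x, η a x = t a → fG a x = τ a x := by
      intro x hx
      rw [hfG, Set.indicator_of_notMem (by simp [hx]),
        Set.indicator_of_mem (by exact hx)]
      simp
    have hlt : ∀ x, η a x < t a → fG a x = 0 := by
      intro x hx
      rw [hfG, Set.indicator_of_notMem (by exact not_lt.mpr hx.le),
        Set.indicator_of_notMem (by exact ne_of_lt hx)]
      simp
    have hfG01 : ∀ x, 0 ≤ fG a x ∧ fG a x ≤ 1 := by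
      intro x
      rcases lt_trichotomy (η a x) (t a) with h | h | h
      · rw [hlt x h]; norm_num
      · rw [heqv x h]; exact ⟨(hτ01 a x).1, (hτ01 a x).2⟩
      · rw [hgt x h]; norm_num
    have hfGm : Measurable (fG a) := by
      have : fG a = fun x => Set.indicator {x | η a x > t a} 1 x
          + τ a x * Set.indicator {x | η a x = t a} 1 x := funext (hfG a)
      rw [this]
      exact (measurable_one.indicator hSgt).add
        ((hτm a).mul (measurable_one.indicator hSeq))
    -- integrability
    have bnd : ∀ (g : X → ℝ), (∀ x, 0 ≤ g x ∧ g x ≤ 1) → ∀ x, |g x| ≤ 1 := by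
      intro g hg x; exact abs_le.mpr ⟨by linarith [(hg x).1], (hg x).2⟩
    have hIf : Integrable (f a) (μ a) :=
      integ_of_bound (μ a) _ (hfm a) 1 (bnd _ fun x => ⟨(hf01 a x).1, (hf01 a x).2⟩)
    have hIfG : Integrable (fG a) (μ a) :=
      integ_of_bound (μ a) _ hfGm 1 (bnd _ hfG01)
    have hIfη : Integrable (fun x => f a x * η a x) (μ a) :=
      integ_of_bound (μ a) _ ((hfm a).mul (hηm a)) 1
        (bnd _ fun x => ⟨mul_nonneg (hf01 a x).1 (hη01 a x).1,
          mul_le_one₀ (hf01 a x).2 (hη01 a x).1 (hη01 a x).2⟩)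
    have hIfGη : Integrable (fun x => fG a x * η a x) (μ a) :=
      integ_of_bound (μ a) _ (hfGm.mul (hηm a)) 1
        (bnd _ fun x => ⟨mul_nonneg (hfG01 x).1 (hη01 a x).1,
          mul_le_one₀ (hfG01 x).2 (hη01 a x).1 (hη01 a x).2⟩)
    have hJ1 : ∫ x, fG a x * η a x ∂μ a = sG * ∫ x, fG a x ∂μ a := by
      have h := (div_eq_iff (ne_of_gt (hdenG a))).mp (hppvG a)
      linarith [h]
    have hJ2 : ∫ x, f a x * η a x ∂μ a = sG * ∫ x, f a x ∂μ a := by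
      have h := (div_eq_iff (ne_of_gt (hden a))).mp (hppvf a)
      linarith [h]
    -- integral of fG * (η - t)
    have hint2 : ∫ x, fG a x * (η a x - t a) ∂μ a
        = (sG - t a) * ∫ x, fG a x ∂μ a := by
      have heq : (fun x => fG a x * (η a x - t a))
          = fun x => fG a x * η a x - t a * fG a x := by funext x; ring
      rw [heq, integral_sub hIfGη (hIfG.const_mul _), integral_const_mul, hJ1]; ring
    have h2nn : ∀ x, 0 ≤ fG a x * (η a x - t a) := by
      intro x
      rcases lt_trichotomy (η a x) (t a) with h | h | h
      · rw [hlt x h]; ring_nf; exact le_refl 0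
      · rw [h]; simp
      · exact mul_nonneg (hfG01 x).1 (by linarith)
    have h2int : 0 ≤ ∫ x, fG a x * (η a x - t a) ∂μ a := integral_nonneg h2nn
    have hsGt : t a ≤ sG := by nlinarith [hdenG a, hint2 ▸ h2int]
    -- integral of (fG - f) * (η - t)
    have hint1 : ∫ x, (fG a x - f a x) * (η a x - t a) ∂μ a
        = (sG - t a) * ((∫ x, fG a x ∂μ a) - ∫ x, f a x ∂μ a) := by
      have heq : (fun x => (fG a x - f a x) * (η a x - t a))
          = fun x => (fG a x * η a x - t a * fG a x) - (f a x * η a x - t a * f a x) := by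
        funext x; ring
      have i1 : Integrable (fun x => fG a x * η a x - t a * fG a x) (μ a) :=
        hIfGη.sub (hIfG.const_mul _)
      have i2 : Integrable (fun x => f a x * η a x - t a * f a x) (μ a) :=
        hIfη.sub (hIf.const_mul _)
      rw [heq, integral_sub i1 i2,
        integral_sub hIfGη (hIfG.const_mul _), integral_sub hIfη (hIf.const_mul _),
        integral_const_mul, integral_const_mul, hJ1, hJ2]
      ring
    have h1nn : ∀ x, 0 ≤ (fG a x - f a x) * (η a x - t a) := by
      intro x
      rcases lt_trichotomy (η a x) (t a) with h | h | h
      · rw [hlt x h]; nlinarith [(hf01 a x).1]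
      · rw [h]; simp
      · rw [hgt x h]; nlinarith [(hf01 a x).2]
    have h1m : Measurable (fun x => (fG a x - f a x) * (η a x - t a)) :=
      (hfGm.sub (hfm a)).mul ((hηm a).sub measurable_const)
    have h1int : Integrable (fun x => (fG a x - f a x) * (η a x - t a)) (μ a) := by
      refine integ_of_bound (μ a) _ h1m 1 ?_
      intro x
      rw [abs_mul]
      have hb1 : |fG a x - f a x| ≤ 1 :=
        abs_le.mpr ⟨by linarith [(hfG01 x).1, (hf01 a x).2], by linarith [(hfG01 x).2, (hf01 a x).1]⟩
      have hb2 : |η a x - t a| ≤ 1 :=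
        abs_le.mpr ⟨by linarith [(hη01 a x).1, (ht a).2], by linarith [(hη01 a x).2, (ht a).1]⟩
      calc |fG a x - f a x| * |η a x - t a| ≤ 1 * 1 :=
            mul_le_mul hb1 hb2 (abs_nonneg _) zero_le_one
        _ = 1 := by norm_num
    by_cases hst : t a < sG
    · -- strict threshold case
      have hineq : ∫ x, f a x ∂μ a ≤ ∫ x, fG a x ∂μ a := by
        have h0 : 0 ≤ (sG - t a) * ((∫ x, fG a x ∂μ a) - ∫ x, f a x ∂μ a) :=
          hint1 ▸ integral_nonneg h1nn
        nlinarith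
      refine ⟨hineq, fun heq0 => ?_⟩
      have hz : ∫ x, (fG a x - f a x) * (η a x - t a) ∂μ a = 0 := by
        rw [hint1, heq0]; ring
      have hae : (fun x => (fG a x - f a x) * (η a x - t a)) =ᵐ[μ a] 0 :=
        (integral_eq_zero_iff_of_nonneg h1nn h1int).mp hz
      filter_upwards [hae] with x hx
      rcases lt_trichotomy (η a x) (t a) with h | h | h
      · have hf0 : f a x = 0 := by
          have := hx
          simp only [Pi.zero_apply] at this
          rcases mul_eq_zero.mp this with h' | h'
          · rw [hlt x h] at h'; linarith
          · linarith
        simp only [Set.indicator_of_notMem (show x ∉ {x | η a x > t a} from not_lt.mpr h.le),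
          Set.indicator_of_notMem (show x ∉ {x | η a x = t a} from ne_of_lt h)]
        simpa using hf0
      · simp only [Set.indicator_of_notMem (show x ∉ {x | η a x > t a} from not_lt.mpr h.le),
          Set.indicator_of_mem (show x ∈ {x | η a x = t a} from h)]
        simp
      · have hf1 : f a x = 1 := by
          have := hx
          simp only [Pi.zero_apply] at this
          rcases mul_eq_zero.mp this with h' | h'
          · rw [hgt x h] at h'; linarith
          · linarith
        simp only [Set.indicator_of_mem (show x ∈ {x | η a x > t a} from h),
          Set.indicator_of_notMem (show x ∉ {x | η a x = t a} from ne_of_gt h)]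
        simpa using hf1
    · -- boundary case : sG = t a
      have hseq : sG = t a := le_antisymm (not_lt.mp hst) hsGt
      have hτ1 : ∀ x, τ a x = 1 := by
        rcases hcond a with h | h
        · exact h
        · exfalso; rw [hJ1, hseq] at h; linarith
      -- fG * (η - t) vanishes a.e., hence η ≤ t a.e.
      have hz2 : ∫ x, fG a x * (η a x - t a) ∂μ a = 0 := by rw [hint2, hseq]; ring
      have h2intg : Integrable (fun x => fG a x * (η a x - t a)) (μ a) := by
        refine integ_of_bound (μ a) _ (hfGm.mul ((hηm a).sub measurable_const)) 1 ?_
        intro x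
        rw [abs_mul]
        have hb1 : |fG a x| ≤ 1 := abs_le.mpr ⟨by linarith [(hfG01 x).1], (hfG01 x).2⟩
        have hb2 : |η a x - t a| ≤ 1 :=
          abs_le.mpr ⟨by linarith [(hη01 a x).1, (ht a).2], by linarith [(hη01 a x).2, (ht a).1]⟩
        calc |fG a x| * |η a x - t a| ≤ 1 * 1 :=
              mul_le_mul hb1 hb2 (abs_nonneg _) zero_le_one
          _ = 1 := by norm_num
      have hae2 : (fun x => fG a x * (η a x - t a)) =ᵐ[μ a] 0 :=
        (integral_eq_zero_iff_of_nonneg h2nn h2intg).mp hz2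
      have haele : ∀ᵐ x ∂μ a, η a x ≤ t a := by
        filter_upwards [hae2] with x hx
        by_contra hgt'
        push_neg at hgt'
        simp only [Pi.zero_apply] at hx
        rw [hgt x hgt'] at hx
        nlinarith
      -- f * (t - η) vanishes a.e.
      have hz3 : ∫ x, f a x * (t a - η a x) ∂μ a = 0 := by
        have heq : (fun x => f a x * (t a - η a x))
            = fun x => t a * f a x - f a x * η a x := by funext x; ring
        rw [heq, integral_sub (hIf.const_mul _) hIfη, integral_const_mul, hJ2, hseq]
        ring
      have h3nn : ∀ᵐ x ∂μ a, 0 ≤ f a x * (t a - η a x) := by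
        filter_upwards [haele] with x hx
        exact mul_nonneg (hf01 a x).1 (by linarith)
      have h3int : Integrable (fun x => f a x * (t a - η a x)) (μ a) := by
        refine integ_of_bound (μ a) _ ((hfm a).mul (measurable_const.sub (hηm a))) 1 ?_
        intro x
        rw [abs_mul]
        have hb1 : |f a x| ≤ 1 := abs_le.mpr ⟨by linarith [(hf01 a x).1], (hf01 a x).2⟩
        have hb2 : |t a - η a x| ≤ 1 :=
          abs_le.mpr ⟨by linarith [(ht a).1, (hη01 a x).2], by linarith [(ht a).2, (hη01 a x).1]⟩
        calc |f a x| * |t a - η a x| ≤ 1 * 1 :=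
              mul_le_mul hb1 hb2 (abs_nonneg _) zero_le_one
          _ = 1 := by norm_num
      have hae3 : (fun x => f a x * (t a - η a x)) =ᵐ[μ a] 0 :=
        (integral_eq_zero_iff_of_nonneg_ae h3nn h3int).mp hz3
      -- a.e. f ≤ fG
      have haefle : ∀ᵐ x ∂μ a, f a x ≤ fG a x := by
        filter_upwards [haele, hae3] with x hx1 hx2
        rcases lt_or_eq_of_le hx1 with h | h
        · have : f a x = 0 := by
            simp only [Pi.zero_apply] at hx2
            rcases mul_eq_zero.mp hx2 with h' | h'
            · exact h'
            · linarith
          rw [hlt x h, this]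
        · rw [heqv x h, hτ1 x]; exact (hf01 a x).2
      have hineq : ∫ x, f a x ∂μ a ≤ ∫ x, fG a x ∂μ a :=
        integral_mono_ae hIf hIfG haefle
      refine ⟨hineq, fun heq0 => ?_⟩
      -- equality forces f = fG a.e.
      have hz4 : ∫ x, (fG a x - f a x) ∂μ a = 0 := by
        rw [integral_sub hIfG hIf, heq0]; ring
      have hae4 : (fun x => fG a x - f a x) =ᵐ[μ a] 0 := by
        refine (integral_eq_zero_iff_of_nonneg_ae ?_ (hIfG.sub hIf)).mp hz4
        filter_upwards [haefle] with x hx; simpa using hx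
      filter_upwards [haele, hae3, hae4] with x hx1 hx2 hx3
      rcases lt_or_eq_of_le hx1 with h | h
      · have hf0 : f a x = 0 := by
          simp only [Pi.zero_apply] at hx2
          rcases mul_eq_zero.mp hx2 with h' | h'
          · exact h'
          · linarith
        simp only [Set.indicator_of_notMem (show x ∉ {x | η a x > t a} from not_lt.mpr h.le),
          Set.indicator_of_notMem (show x ∉ {x | η a x = t a} from ne_of_lt h)]
        simpa using hf0
      · simp only [Set.indicator_of_notMem (show x ∉ {x | η a x > t a} from not_lt.mpr h.le),
          Set.indicator_of_mem (show x ∈ {x | η a x = t a} from h)]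
        simp
  -- assemble
  by_contra hcon
  push_neg at hcon
  have hterm : ∀ a ∈ Finset.univ, (0:ℝ) ≤ p a * ((∫ x, fG a x ∂μ a) - ∫ x, f a x ∂μ a) :=
    fun a _ => mul_nonneg (hp a).le (sub_nonneg.mpr (key a).1)
  have hsum0 : ∑ a, p a * ((∫ x, fG a x ∂μ a) - ∫ x, f a x ∂μ a) = 0 :=
    le_antisymm hcon (Finset.sum_nonneg hterm)
  have hzero : ∀ a, (∫ x, fG a x ∂μ a) = ∫ x, f a x ∂μ a := by
    intro a
    have h := (Finset.sum_eq_zero_iff_of_nonneg hterm).mp hsum0 a (Finset.mem_univ a)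
    rcases mul_eq_zero.mp h with h' | h'
    · exact absurd h' (ne_of_gt (hp a))
    · linarith [sub_eq_zero.mp h']
  exact hnotGWTR ⟨t, fun a x => f a x, ht, hf01, fun a => (key a).2 (hzero a)⟩
end

section
/- Let 𝒜 = {0,1} with weights p_1 = P(A=1), p_0 = 1 − p_1, feature distributions P_{X|a}, conditional probabilities η_a : X → [0,1], and c ∈ (0,1). Suppose there exist δ₁, δ₂ > 0 and t₁ > c such that P(c + δ₁ < η_1(X) < t₁ | A=1) ≥ δ₂, and suppose f_G, f_{NG} are classifiers with f_G(x,1) = 0 for all x with c < η_1(x) < t₁' for some t₁' ≥ t₁, and f_{NG}(x,1) = I(η_1(x) ≥ c). Then the difference of cost-sensitive risks satisfies R_c(f_G) − R_c(f_{NG}) ≥ p_1 δ₁ δ₂ − 2(1 − p_1); in particular if p_1 > 2/(2 + δ₁δ₂) then R_c(f_G) > R_c(f_{NG}). -/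
/-!
Writing `r(η, a) = c a (1 - η) + (1 - c)(1 - a) η` for the conditional cost of predicting `a`,
one has `r(η, a) - r(η, b) = (a - b)(c - η)`. Hence thresholding `η₁` at `c` is pointwise optimal
in group 1, and on the set where `c + δ₁ < η₁ < t₁` (mass at least `δ₂`) the rejecting rule
`f_G` pays at least `δ₁` more. In group 0 both risks lie in `[-1, 1]`, so they differ by at most `2`.
-/

open MeasureTheory Set

noncomputable section

def pointwiseCostRisk (c η a : ℝ) : ℝ :=
  c * a * (1 - η) + (1 - c) * (1 - a) * η

lemma pointwiseCostRisk_sub (c η a b : ℝ) :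
    pointwiseCostRisk c η a - pointwiseCostRisk c η b = (a - b) * (c - η) := by
  unfold pointwiseCostRisk
  ring

lemma abs_pointwiseCostRisk_le_one {c η a : ℝ} (hc : c ∈ Icc (0 : ℝ) 1)
    (hη : η ∈ Icc (0 : ℝ) 1) (ha : a ∈ Icc (0 : ℝ) 1) : |pointwiseCostRisk c η a| ≤ 1 := by
  obtain ⟨hc0, hc1⟩ := hc
  obtain ⟨hη0, hη1⟩ := hη
  obtain ⟨ha0, ha1⟩ := ha
  unfold pointwiseCostRisk
  rw [abs_le]
  constructor <;> nlinarith [mul_nonneg ha0 hη0, mul_nonneg (sub_nonneg.2 ha1) (sub_nonneg.2 hη1)]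

lemma pointwiseCostRisk_threshold_le {c η a : ℝ} (ha : a ∈ Icc (0 : ℝ) 1) :
    pointwiseCostRisk c η (if c ≤ η then 1 else 0) ≤ pointwiseCostRisk c η a := by
  rw [← sub_nonneg, pointwiseCostRisk_sub]
  split_ifs with h
  · exact mul_nonneg_of_nonpos_of_nonpos (by linarith [ha.2]) (by linarith)
  · exact mul_nonneg (by linarith [ha.1]) (by linarith)

section Integrals

variable {X : Type*} [MeasurableSpace X] (μ : Measure X) {c : ℝ} {η f : X → ℝ}

lemma integrable_pointwiseCostRisk [IsFiniteMeasure μ] (hc : c ∈ Icc (0 : ℝ) 1)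
    (hηm : Measurable η) (hfm : Measurable f) (hη : ∀ x, η x ∈ Icc (0 : ℝ) 1)
    (hf : ∀ x, f x ∈ Icc (0 : ℝ) 1) :
    Integrable (fun x => pointwiseCostRisk c (η x) (f x)) μ := by
  refine Integrable.mono' (integrable_const (1 : ℝ)) ?_ (ae_of_all _ fun x => ?_)
  · unfold pointwiseCostRisk
    fun_prop
  · exact abs_pointwiseCostRisk_le_one hc (hη x) (hf x)

lemma abs_integral_pointwiseCostRisk_sub_le_two [IsProbabilityMeasure μ]
    (hc : c ∈ Icc (0 : ℝ) 1) (hη : ∀ x, η x ∈ Icc (0 : ℝ) 1) {g : X → ℝ}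
    (hf : ∀ x, f x ∈ Icc (0 : ℝ) 1) (hg : ∀ x, g x ∈ Icc (0 : ℝ) 1) :
    |∫ x, pointwiseCostRisk c (η x) (f x) ∂μ - ∫ x, pointwiseCostRisk c (η x) (g x) ∂μ| ≤ 2 := by
  have hbound : ∀ h : X → ℝ, (∀ x, h x ∈ Icc (0 : ℝ) 1) →
      |∫ x, pointwiseCostRisk c (η x) (h x) ∂μ| ≤ 1 := fun h hh => by
    simpa using norm_integral_le_of_norm_le_const (μ := μ) (C := 1)
      (f := fun x => pointwiseCostRisk c (η x) (h x))
      (ae_of_all _ fun x => abs_pointwiseCostRisk_le_one hc (hη x) (hh x))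
  linarith [abs_sub _ _ |>.trans (add_le_add (hbound f hf) (hbound g hg))]

lemma mul_measureReal_le_integral_sub_threshold [IsFiniteMeasure μ] (hc : c ∈ Icc (0 : ℝ) 1)
    {δ : ℝ} (hδ : 0 ≤ δ) (hηm : Measurable η) (hfm : Measurable f)
    (hη : ∀ x, η x ∈ Icc (0 : ℝ) 1) (hf : ∀ x, f x ∈ Icc (0 : ℝ) 1)
    {S : Set X} (hS : MeasurableSet S) (hηS : ∀ x ∈ S, c + δ < η x) (hfS : ∀ x ∈ S, f x = 0) :
    δ * μ.real S ≤ ∫ x, pointwiseCostRisk c (η x) (f x) ∂μ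
      - ∫ x, pointwiseCostRisk c (η x) (if c ≤ η x then 1 else 0) ∂μ := by
  have hthm : Measurable fun x => if c ≤ η x then (1 : ℝ) else 0 :=
    Measurable.ite (measurableSet_le measurable_const hηm) measurable_const measurable_const
  have hthr : ∀ x, (if c ≤ η x then (1 : ℝ) else 0) ∈ Icc (0 : ℝ) 1 := fun x => by
    split_ifs <;> norm_num
  have hfi := integrable_pointwiseCostRisk μ hc hηm hfm hη hf
  have hthi := integrable_pointwiseCostRisk μ hc hηm hthm hη hthr
  have hgain : ∀ x, S.indicator (fun _ => δ) x
      ≤ pointwiseCostRisk c (η x) (f x) - pointwiseCostRisk c (η x) (if c ≤ η x then 1 else 0) := by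
    intro x
    by_cases hx : x ∈ S
    · have hcη : c ≤ η x := by linarith [hηS x hx]
      rw [indicator_of_mem hx, pointwiseCostRisk_sub, hfS x hx, if_pos hcη]
      linarith [hηS x hx]
    · rw [indicator_of_notMem hx, sub_nonneg]
      exact pointwiseCostRisk_threshold_le (hf x)
  calc δ * μ.real S = ∫ x, S.indicator (fun _ => δ) x ∂μ := by
        rw [integral_indicator_const δ hS, smul_eq_mul, mul_comm]
    _ ≤ _ := integral_mono ((integrable_const δ).indicator hS) (hfi.sub hthi) hgain
    _ = _ := integral_sub hfi hthi

end Integrals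

end

theorem stmt_15_general {X : Type*} [MeasurableSpace X]
    (μ₁ μ₀ : Measure X) [IsProbabilityMeasure μ₁] [IsProbabilityMeasure μ₀]
    (η₁ η₀ : X → ℝ) (hη₁m : Measurable η₁)
    (hη₁01 : ∀ x, η₁ x ∈ Set.Icc (0:ℝ) 1) (hη₀01 : ∀ x, η₀ x ∈ Set.Icc (0:ℝ) 1)
    (p₁ : ℝ) (hp₁0 : 0 < p₁) (hp₁1 : p₁ ≤ 1)
    (c : ℝ) (hc : c ∈ Set.Ioo (0:ℝ) 1)
    (δ₁ δ₂ : ℝ) (hδ₁ : 0 < δ₁) (hδ₂ : 0 < δ₂)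
    (t₁ : ℝ)
    (hmass : δ₂ ≤ (μ₁ {x | c + δ₁ < η₁ x ∧ η₁ x < t₁}).toReal)
    (fG₁ fG₀ fNG₁ fNG₀ : X → ℝ)
    (hfG₁m : Measurable fG₁)
    (hfG₁01 : ∀ x, fG₁ x ∈ Set.Icc (0:ℝ) 1) (hfG₀01 : ∀ x, fG₀ x ∈ Set.Icc (0:ℝ) 1)
    (t₁' : ℝ) (ht₁' : t₁ ≤ t₁')
    (hfG₁zero : ∀ x, c < η₁ x → η₁ x < t₁' → fG₁ x = 0)
    (hfNG₁ : ∀ x, fNG₁ x = Set.indicator {x | η₁ x ≥ c} 1 x)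
    (hfNG₀01 : ∀ x, fNG₀ x ∈ Set.Icc (0:ℝ) 1)
    (R : (X → ℝ) → (X → ℝ) → ℝ)
    (hR : ∀ g₁ g₀ : X → ℝ,
      R g₁ g₀ = p₁ * ∫ x, (c * g₁ x * (1 - η₁ x) + (1 - c) * (1 - g₁ x) * η₁ x) ∂μ₁
        + (1 - p₁) * ∫ x, (c * g₀ x * (1 - η₀ x) + (1 - c) * (1 - g₀ x) * η₀ x) ∂μ₀) :
    p₁ * δ₁ * δ₂ - 2 * (1 - p₁) ≤ R fG₁ fG₀ - R fNG₁ fNG₀ ∧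
    (2 / (2 + δ₁ * δ₂) < p₁ → R fNG₁ fNG₀ < R fG₁ fG₀) := by
  have hc' : c ∈ Icc (0 : ℝ) 1 := Ioo_subset_Icc_self hc
  have hR' : ∀ g₁ g₀ : X → ℝ, R g₁ g₀ = p₁ * ∫ x, pointwiseCostRisk c (η₁ x) (g₁ x) ∂μ₁
      + (1 - p₁) * ∫ x, pointwiseCostRisk c (η₀ x) (g₀ x) ∂μ₀ := hR
  have hNG₁ : fNG₁ = fun x => if c ≤ η₁ x then 1 else 0 := by
    funext x
    simp [hfNG₁, indicator_apply]
  have hgain₁ := mul_measureReal_le_integral_sub_threshold μ₁ hc' hδ₁.le hη₁m hfG₁m hη₁01 hfG₁01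
    (S := {x | c + δ₁ < η₁ x ∧ η₁ x < t₁})
    ((measurableSet_lt measurable_const hη₁m).inter (measurableSet_lt hη₁m measurable_const))
    (fun x hx => hx.1) (fun x hx => hfG₁zero x (by linarith [hx.1]) (hx.2.trans_le ht₁'))
  have hloss₀ := neg_le_of_abs_le
    (abs_integral_pointwiseCostRisk_sub_le_two μ₀ hc' hη₀01 hfG₀01 hfNG₀01)
  have hrisk : p₁ * δ₁ * δ₂ - 2 * (1 - p₁) ≤ R fG₁ fG₀ - R fNG₁ fNG₀ := by
    rw [← measureReal_def] at hmass
    simp only [hR', hNG₁]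
    nlinarith [mul_le_mul_of_nonneg_left hmass hδ₁.le, mul_le_mul_of_nonneg_left hgain₁ hp₁0.le,
      mul_le_mul_of_nonneg_left hloss₀ (sub_nonneg.2 hp₁1)]
  refine ⟨hrisk, fun hp => ?_⟩
  rw [div_lt_iff₀ (by positivity)] at hp
  linarith

/-- Theorem 2's quantitative core: comparing a GWTR that rejects group-1 points with
`c < η₁ < t₁'` against the non-GWTR classifier thresholding group 1 at `c`. -/
theorem stmt_15 {X : Type*} [MeasurableSpace X]
    (μ₁ μ₀ : Measure X) [IsProbabilityMeasure μ₁] [IsProbabilityMeasure μ₀]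
    (η₁ η₀ : X → ℝ) (hη₁m : Measurable η₁) (hη₀m : Measurable η₀)
    (hη₁01 : ∀ x, η₁ x ∈ Set.Icc (0:ℝ) 1) (hη₀01 : ∀ x, η₀ x ∈ Set.Icc (0:ℝ) 1)
    (p₁ : ℝ) (hp₁0 : 0 < p₁) (hp₁1 : p₁ ≤ 1)
    (c : ℝ) (hc : c ∈ Set.Ioo (0:ℝ) 1)
    (δ₁ δ₂ : ℝ) (hδ₁ : 0 < δ₁) (hδ₂ : 0 < δ₂)
    (t₁ : ℝ) (ht₁ : c < t₁)
    (hmass : δ₂ ≤ (μ₁ {x | c + δ₁ < η₁ x ∧ η₁ x < t₁}).toReal)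
    (fG₁ fG₀ fNG₁ fNG₀ : X → ℝ)
    (hfG₁m : Measurable fG₁) (hfG₀m : Measurable fG₀)
    (hfG₁01 : ∀ x, fG₁ x ∈ Set.Icc (0:ℝ) 1) (hfG₀01 : ∀ x, fG₀ x ∈ Set.Icc (0:ℝ) 1)
    (t₁' : ℝ) (ht₁' : t₁ ≤ t₁')
    (hfG₁zero : ∀ x, c < η₁ x → η₁ x < t₁' → fG₁ x = 0)
    (hfNG₁ : ∀ x, fNG₁ x = Set.indicator {x | η₁ x ≥ c} 1 x)
    (hfNG₀m : Measurable fNG₀) (hfNG₀01 : ∀ x, fNG₀ x ∈ Set.Icc (0:ℝ) 1)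
    (R : (X → ℝ) → (X → ℝ) → ℝ)
    (hR : ∀ g₁ g₀ : X → ℝ,
      R g₁ g₀ = p₁ * ∫ x, (c * g₁ x * (1 - η₁ x) + (1 - c) * (1 - g₁ x) * η₁ x) ∂μ₁
        + (1 - p₁) * ∫ x, (c * g₀ x * (1 - η₀ x) + (1 - c) * (1 - g₀ x) * η₀ x) ∂μ₀) :
    p₁ * δ₁ * δ₂ - 2 * (1 - p₁) ≤ R fG₁ fG₀ - R fNG₁ fNG₀ ∧
    (2 / (2 + δ₁ * δ₂) < p₁ → R fNG₁ fNG₀ < R fG₁ fG₀) :=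
  stmt_15_general μ₁ μ₀ η₁ η₀ hη₁m hη₁01 hη₀01 p₁ hp₁0 hp₁1 c hc δ₁ δ₂ hδ₁ hδ₂ t₁ hmass fG₁ fG₀ fNG₁
    fNG₀ hfG₁m hfG₁01 hfG₀01 t₁' ht₁' hfG₁zero hfNG₁ hfNG₀01 R hR
end
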